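/- A map ε : X×X∖Δ → P(M) is NOT a Fitch map if and only if there exist colors m, m' ∈ M (not necessarily distinct) and either a 3-subset {a,b,c} ⊆ X with m ∈ ε(c,b), m ∉ ε(a,b), satisfying one of: (1) m ∉ ε(c,a); (2a) m' ∉ ε(a,c) and m' ∈ ε(b,c); (2b) m' ∈ ε(a,c) and m' ∉ ε(b,c); (3) m ≠ m', m' ∉ ε(c,b), m' ∈ ε(a,b); or a 4-subset {a,b,c,d} ⊆ X with m ∈ ε(c,b), m ∉ ε(a,b), m ≠ m', m' ∉ ε(b,d) ∪ ε(c,d), and m' ∈ ε(a,d). -/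

import Mathlib

/-- A finite rooted phylogenetic tree on leaf set `X`, with vertex type `V`.
Vertices are encoded via a parent function; `par root = root`. -/
structure PhyloTree (V X : Type) : Type where
  fin : Finite V
  root : V
  par : V → V
  par_root : par root = root
  reach : ∀ v : V, ∃ n : ℕ, par^[n] v = root
  leaf : X → V
  leaf_inj : Function.Injective leaf
  leaf_isLeaf : ∀ (x : X) (u : V), par u = leaf x → u = leaf x
  leaf_only : ∀ v : V, (∀ u : V, par u = v → u = v) → ∃ x : X, leaf x = v
  root_deg : (∃ x : X, leaf x = root) ∨ 2 ≤ {u : V | par u = root ∧ u ≠ root}.ncard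
  inner_deg : ∀ v : V, v ≠ root → (¬ ∃ x : X, leaf x = v) →
      2 ≤ {u : V | par u = v ∧ u ≠ v}.ncard

namespace PhyloTree

variable {V X : Type}

/-- `T.anc u v` : `u` is an ancestor of `v`, i.e. `u ⪯_T v`. -/
def anc (T : PhyloTree V X) (u v : V) : Prop := ∃ n : ℕ, T.par^[n] v = u

/-- `l` is the last common ancestor of `a` and `b`. -/
def IsLca (T : PhyloTree V X) (l a b : V) : Prop :=
  T.anc l a ∧ T.anc l b ∧ ∀ u : V, T.anc u a → T.anc u b → T.anc u l

/-- The cluster of `v`: the set of leaves below `v`. -/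
def cluster (T : PhyloTree V X) (v : V) : Set X := {x : X | T.anc v (T.leaf x)}

/-- The cluster set `C(T)`. -/
def clusterSet (T : PhyloTree V X) : Set (Set X) := {S : Set X | ∃ v : V, S = T.cluster v}

/-- The edge `(par u, u)` lies on the descending path from `a` down to `b`. -/
def edgeOnDown (T : PhyloTree V X) (a b u : V) : Prop :=
  T.anc a u ∧ u ≠ a ∧ T.anc u b

/-- The edge `(par u, u)` lies on the unique path between `v` and `w`. -/
def edgeOnPath (T : PhyloTree V X) (v w u : V) : Prop :=
  ∃ l : V, T.IsLca l v w ∧ (T.edgeOnDown l v u ∨ T.edgeOnDown l w u)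

/-- `T` displays the rooted triple `ab|c`. -/
def Displays (T : PhyloTree V X) (a b c : X) : Prop :=
  ∃ l3 l2 : V, T.IsLca l2 (T.leaf a) (T.leaf b) ∧
    T.IsLca l3 l2 (T.leaf c) ∧ l3 ≠ l2

end PhyloTree

/-- `(T, lab)` explains `ε` : for distinct leaves `x,y`, `m ∈ ε x y` iff there is an
`m`-edge on the path from `lca(x,y)` down to `y`. -/
def Explains {V X M : Type} (T : PhyloTree V X) (lab : V → Set M)
    (ε : X → X → Set M) : Prop :=
  ∀ x y : X, x ≠ y → ∀ m : M,
    (m ∈ ε x y ↔ ∃ l : V, T.IsLca l (T.leaf x) (T.leaf y) ∧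
      ∃ u : V, T.edgeOnDown l (T.leaf y) u ∧ m ∈ lab u)

/-- `ε` is a Fitch map: it is explained by some edge-labeled phylogenetic tree. -/
def IsFitchMap {X M : Type} (ε : X → X → Set M) : Prop :=
  ∃ (V : Type) (T : PhyloTree V X) (lab : V → Set M), Explains T lab ε

/-- The complementary neighborhood `N_{¬m}[y]`. -/
def Nbr {X M : Type} (ε : X → X → Set M) (m : M) (y : X) : Set X :=
  {x : X | x ≠ y ∧ m ∉ ε x y} ∪ {y}

/-- The collection `N[ε]` of all complementary neighborhoods. -/
def NbrSet {X M : Type} (ε : X → X → Set M) : Set (Set X) :=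
  {N : Set X | ∃ (m : M) (y : X), N = Nbr ε m y}

/-- A set system is hierarchy-like if any two members intersect in `∅` or one of them. -/
def HLike {X : Type} (H : Set (Set X)) : Prop :=
  ∀ P ∈ H, ∀ Q ∈ H, P ∩ Q = P ∨ P ∩ Q = Q ∨ P ∩ Q = ∅

/-- The inequality condition (IC). -/
def IneqCond {X M : Type} (ε : X → X → Set M) : Prop :=
  ∀ (m : M) (y y' : X), y' ∈ Nbr ε m y → (Nbr ε m y').ncard ≤ (Nbr ε m y).ncard

/-!
`ε` is a Fitch map iff the complementary neighbourhoods `N_{¬m}[y]` are hierarchy-like and nested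
along membership: `y' ∈ N_{¬m}[y]` implies `N_{¬m}[y'] ⊆ N_{¬m}[y]` (the subset form of the
inequality condition). If `(T, λ)` explains `ε`, then `N_{¬m}[y]` is the cluster of the highest
vertex above `y` whose path down to `y` carries no `m`; clusters of a tree are nested or disjoint,
and comparing the two highest vertices gives the subset condition. Conversely, the neighbourhoods
together with the singletons and `X` form a hierarchy; its covering relation is a phylogenetic
tree, and labelling the vertex `N_{¬m}[z]` with `m` explains `ε`, the subset condition being what
forces an `m`-edge below `lca(x, y)` to lie above `N_{¬m}[y]`.

Each forbidden configuration exhibits two crossing neighbourhoods, except (1), which violates the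
subset condition; conversely, a crossing pair or a violation of the subset condition yields one of
the configurations by a case analysis on the two centres.
-/

section HLike

variable {X : Type} {H H' : Set (Set X)}

theorem hlike_iff_subset_or_subset :
    HLike H ↔ ∀ P ∈ H, ∀ Q ∈ H, (P ∩ Q).Nonempty → P ⊆ Q ∨ Q ⊆ P := by
  refine forall₄_congr fun P _ Q _ => ?_
  rw [Set.inter_eq_left, Set.inter_eq_right, ← Set.not_nonempty_iff_eq_empty]
  tauto

theorem HLike.subset_or_subset (hH : HLike H) {P Q : Set X} (hP : P ∈ H) (hQ : Q ∈ H)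
    (hPQ : (P ∩ Q).Nonempty) : P ⊆ Q ∨ Q ⊆ P :=
  hlike_iff_subset_or_subset.mp hH P hP Q hQ hPQ

theorem HLike.not_crossing (hH : HLike H) {P Q : Set X} (hP : P ∈ H) (hQ : Q ∈ H) {p q r : X}
    (hp : p ∈ P ∩ Q) (hq : q ∈ P \ Q) (hr : r ∈ Q \ P) : False :=
  (hH.subset_or_subset hP hQ ⟨p, hp⟩).elim (fun h => hq.2 (h hq.1)) fun h => hr.2 (h hr.1)

theorem HLike.mono (hH' : HLike H') (h : H ⊆ H') : HLike H :=
  fun P hP Q hQ => hH' P (h hP) Q (h hQ)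

end HLike

namespace PhyloTree

variable {V X : Type} {T : PhyloTree V X} {u v w : V}

theorem anc_refl (T : PhyloTree V X) (v : V) : T.anc v v := ⟨0, rfl⟩

theorem anc_trans (huv : T.anc u v) (hvw : T.anc v w) : T.anc u w := by
  obtain ⟨n, rfl⟩ := huv
  obtain ⟨k, rfl⟩ := hvw
  exact ⟨n + k, Function.iterate_add_apply _ _ _ _⟩

theorem eq_root_of_isPeriodicPt {n : ℕ} (hn : 0 < n) (h : Function.IsPeriodicPt T.par n v) :
    v = T.root := by
  obtain ⟨N, hN⟩ := T.reach v
  calc v = T.par^[n * N] v := (h.mul_const N).eq.symm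
    _ = T.par^[n * N - N] (T.par^[N] v) := by
      rw [← Function.iterate_add_apply, Nat.sub_add_cancel (Nat.le_mul_of_pos_left N hn)]
    _ = T.root := by rw [hN, Function.iterate_fixed T.par_root]

theorem anc_antisymm (huv : T.anc u v) (hvu : T.anc v u) : u = v := by
  obtain ⟨n, rfl⟩ := huv
  obtain ⟨k, hk⟩ := hvu
  rcases Nat.eq_zero_or_pos n with rfl | hn
  · rfl
  · have hv : v = T.root := eq_root_of_isPeriodicPt (n := k + n) (by omega) <| by
      rw [Function.IsPeriodicPt, Function.IsFixedPt, Function.iterate_add_apply, hk]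
    rw [hv, Function.iterate_fixed T.par_root]

theorem anc_total (huw : T.anc u w) (hvw : T.anc v w) : T.anc u v ∨ T.anc v u := by
  obtain ⟨n, rfl⟩ := huw
  obtain ⟨k, rfl⟩ := hvw
  rcases le_total n k with h | h
  · right
    exact ⟨k - n, by rw [← Function.iterate_add_apply, Nat.sub_add_cancel h]⟩
  · left
    exact ⟨n - k, by rw [← Function.iterate_add_apply, Nat.sub_add_cancel h]⟩

theorem exists_lowest_of_forall_anc {S : Set V} (hS : S.Nonempty)
    (h : ∀ u ∈ S, T.anc u w) : ∃ v ∈ S, ∀ u ∈ S, T.anc u v := by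
  have := T.fin
  obtain ⟨v, hvS, hmin⟩ := S.toFinite.exists_minimalFor (fun u => {x | T.anc u x}) S hS
  refine ⟨v, hvS, fun u hu => (anc_total (h u hu) (h v hvS)).elim id fun hvu => ?_⟩
  exact hmin hu (fun x hx => anc_trans hvu hx) (T.anc_refl v)

theorem exists_highest_of_forall_anc {S : Set V} (hS : S.Nonempty)
    (h : ∀ u ∈ S, T.anc u w) : ∃ v ∈ S, ∀ u ∈ S, T.anc v u := by
  have := T.fin
  obtain ⟨v, hvS, hmax⟩ := S.toFinite.exists_maximalFor (fun u => {x | T.anc u x}) S hS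
  refine ⟨v, hvS, fun u hu => (anc_total (h v hvS) (h u hu)).elim id fun huv => ?_⟩
  exact hmax hu (fun x hx => anc_trans huv hx) (T.anc_refl u)

theorem exists_isLca (T : PhyloTree V X) (a b : V) : ∃ l, T.IsLca l a b := by
  obtain ⟨l, ⟨hla, hlb⟩, hmin⟩ := exists_lowest_of_forall_anc
    (S := {u | T.anc u a ∧ T.anc u b}) ⟨T.root, T.reach a, T.reach b⟩ fun u hu => hu.1
  exact ⟨l, hla, hlb, fun u hua hub => hmin u ⟨hua, hub⟩⟩

theorem IsLca.unique {l l' a b : V} (h : T.IsLca l a b) (h' : T.IsLca l' a b) : l = l' :=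
  anc_antisymm (h'.2.2 l h.1 h.2.1) (h.2.2 l' h'.1 h'.2.1)

theorem hlike_clusterSet (T : PhyloTree V X) : HLike T.clusterSet := by
  refine hlike_iff_subset_or_subset.mpr ?_
  rintro _ ⟨u, rfl⟩ _ ⟨v, rfl⟩ ⟨x, hxu, hxv⟩
  exact (anc_total hxu hxv).symm.imp (fun h y hy => anc_trans h hy) fun h y hy => anc_trans h hy

end PhyloTree

theorem mem_nbr_iff {X M : Type} {ε : X → X → Set M} {m : M} {x y : X} :
    x ∈ Nbr ε m y ↔ x = y ∨ m ∉ ε x y := by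
  by_cases h : x = y <;> simp [Nbr, h]

theorem mem_nbr_self {X M : Type} {ε : X → X → Set M} {m : M} {y : X} : y ∈ Nbr ε m y :=
  Or.inr rfl

def NbrSubsetCond {X M : Type} (ε : X → X → Set M) : Prop :=
  ∀ (m : M) (y y' : X), y' ∈ Nbr ε m y → Nbr ε m y' ⊆ Nbr ε m y

namespace PhyloTree

variable {V X M : Type} {T : PhyloTree V X} {lab : V → Set M} {m : M} {u v b : V}

def NoLabelOnDown (T : PhyloTree V X) (lab : V → Set M) (m : M) (u b : V) : Prop :=
  ∀ w, T.edgeOnDown u b w → m ∉ lab w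

theorem noLabelOnDown_self : T.NoLabelOnDown lab m b b :=
  fun _ ⟨hbw, hne, hwb⟩ => absurd (anc_antisymm hwb hbw) hne

theorem NoLabelOnDown.of_anc (h : T.NoLabelOnDown lab m u b) (huv : T.anc u v) :
    T.NoLabelOnDown lab m v b := by
  rintro w ⟨hvw, hwv, hwb⟩
  refine h w ⟨anc_trans huv hvw, ?_, hwb⟩
  rintro rfl
  exact hwv (anc_antisymm huv hvw)

/-- Above `v` the path from `u` down to `b` runs along the path from `u` down to `c`, and below
`v` along the path from `v` down to `b`. -/
theorem NoLabelOnDown.branch {c : V} (hu : T.NoLabelOnDown lab m u c)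
    (hv : T.NoLabelOnDown lab m v b) (hvc : T.anc v c) (hvb : T.anc v b) :
    T.NoLabelOnDown lab m u b := by
  rintro w ⟨huw, hwu, hwb⟩
  by_cases hwv : T.anc w v
  · exact hu w ⟨huw, hwu, anc_trans hwv hvc⟩
  · have hvw : T.anc v w := (anc_total hvb hwb).resolve_right hwv
    exact hv w ⟨hvw, fun h => hwv (h ▸ T.anc_refl v), hwb⟩

theorem exists_highest_noLabelOnDown (T : PhyloTree V X) (lab : V → Set M) (m : M) (b : V) :
    ∃ v, (T.anc v b ∧ T.NoLabelOnDown lab m v b) ∧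
      ∀ u, T.anc u b ∧ T.NoLabelOnDown lab m u b → T.anc v u :=
  exists_highest_of_forall_anc ⟨b, T.anc_refl b, noLabelOnDown_self⟩ fun _ h => h.1

end PhyloTree

namespace Explains

open PhyloTree

variable {V X M : Type} {T : PhyloTree V X} {lab : V → Set M} {ε : X → X → Set M} {m : M}

theorem not_mem_iff (hex : Explains T lab ε) {x y : X} (hxy : x ≠ y) {l : V}
    (hl : T.IsLca l (T.leaf x) (T.leaf y)) :
    m ∉ ε x y ↔ T.NoLabelOnDown lab m l (T.leaf y) := by
  rw [hex x y hxy m]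
  constructor
  · exact fun h w hw hm => h ⟨l, hl, w, hw, hm⟩
  · rintro h ⟨l', hl', w, hw, hm⟩
    exact h w (hl'.unique hl ▸ hw) hm

theorem nbr_eq_cluster (hex : Explains T lab ε) {y : X} {v : V} (hvy : T.anc v (T.leaf y))
    (hv : T.NoLabelOnDown lab m v (T.leaf y))
    (hmax : ∀ u, T.anc u (T.leaf y) ∧ T.NoLabelOnDown lab m u (T.leaf y) → T.anc v u) :
    Nbr ε m y = T.cluster v := by
  ext x
  rw [mem_nbr_iff]
  rcases eq_or_ne x y with rfl | hxy
  · exact iff_of_true (Or.inl rfl) hvy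
  obtain ⟨l, hl⟩ := T.exists_isLca (T.leaf x) (T.leaf y)
  rw [or_iff_right hxy, hex.not_mem_iff hxy hl]
  exact ⟨fun h => anc_trans (hmax l ⟨hl.2.1, h⟩) hl.1, fun h => hv.of_anc (hl.2.2 v h hvy)⟩

theorem exists_nbr_eq_cluster (hex : Explains T lab ε) (m : M) (y : X) :
    ∃ v, Nbr ε m y = T.cluster v := by
  obtain ⟨v, ⟨hvy, hv⟩, hmax⟩ := T.exists_highest_noLabelOnDown lab m (T.leaf y)
  exact ⟨v, hex.nbr_eq_cluster hvy hv hmax⟩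

theorem hlike_nbrSet (hex : Explains T lab ε) : HLike (NbrSet ε) :=
  T.hlike_clusterSet.mono fun _ ⟨m, y, hN⟩ => hN ▸ hex.exists_nbr_eq_cluster m y

theorem nbrSubsetCond (hex : Explains T lab ε) : NbrSubsetCond ε := by
  intro m y y' hy'
  obtain ⟨v, ⟨hvy, hv⟩, hmax⟩ := T.exists_highest_noLabelOnDown lab m (T.leaf y)
  obtain ⟨v', ⟨hvy', hv'⟩, hmax'⟩ := T.exists_highest_noLabelOnDown lab m (T.leaf y')
  rw [hex.nbr_eq_cluster hvy hv hmax, hex.nbr_eq_cluster hvy' hv' hmax'] at *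
  suffices T.anc v v' from fun x hx => anc_trans this hx
  refine (anc_total hy' hvy').elim id fun hv'v => hmax v' ⟨anc_trans hv'v hvy, ?_⟩
  exact hv'.branch hv hy' hvy

end Explains

structure IsHierarchy {X : Type} (H : Set (Set X)) : Prop where
  hlike : HLike H
  univ_mem : Set.univ ∈ H
  singleton_mem : ∀ x, {x} ∈ H
  nonempty : ∀ S ∈ H, S.Nonempty

open Classical in
noncomputable def IsHierarchy.parent {X : Type} (H : Set (Set X)) (v : H) : H :=
  if h : ∃ w, v ⋖ w then h.choose else v

namespace IsHierarchy

variable {X : Type} {H : Set (Set X)} {u v w : H}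

theorem le_total_of_le (hH : IsHierarchy H) (hvu : v ≤ u) (hvw : v ≤ w) : u ≤ w ∨ w ≤ u := by
  obtain ⟨x, hx⟩ := hH.nonempty v v.2
  exact hH.hlike.subset_or_subset u.2 w.2 ⟨x, hvu hx, hvw hx⟩

theorem ne_univ_of_lt (hvw : v < w) : (v : Set X) ≠ Set.univ :=
  fun hv => hvw.not_ge (Subtype.coe_le_coe.mp (hv ▸ Set.subset_univ (w : Set X)))

theorem parent_eq_self (hv : (v : Set X) = Set.univ) : parent H v = v := by
  rw [parent, dif_neg]
  rintro ⟨w, hvw⟩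
  exact hvw.lt.not_ge (Subtype.coe_le_coe.mp (hv ▸ Set.subset_univ (w : Set X)))

variable [Finite X]

theorem covBy_parent (hH : IsHierarchy H) (hv : (v : Set X) ≠ Set.univ) :
    v ⋖ parent H v := by
  have hlt : v < ⟨Set.univ, hH.univ_mem⟩ :=
    Subtype.coe_lt_coe.mp ((Set.subset_univ _).ssubset_of_ne hv)
  obtain ⟨w, hvw, -⟩ := exists_covBy_le_of_lt hlt
  have h : ∃ w, v ⋖ w := ⟨w, hvw⟩
  rw [parent, dif_pos h]
  exact h.choose_spec

theorem parent_le (hH : IsHierarchy H) (hvw : v < w) : parent H v ≤ w := by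
  have hv := covBy_parent hH (ne_univ_of_lt hvw)
  rcases hH.le_total_of_le hv.le hvw.le with h | h
  · exact h
  · exact ((hv.eq_or_eq hvw.le h).resolve_left hvw.ne').ge

theorem parent_eq_of_covBy (hH : IsHierarchy H) (hvw : v ⋖ w) : parent H v = w := by
  have hv := covBy_parent hH (ne_univ_of_lt hvw.lt)
  exact ((hvw.eq_or_eq hv.le (hH.parent_le hvw.lt)).resolve_left hv.lt.ne')

theorem le_parent (hH : IsHierarchy H) (v : H) : v ≤ parent H v := by
  by_cases hv : (v : Set X) = Set.univ
  · exact (parent_eq_self hv).ge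
  · exact (covBy_parent hH hv).le

theorem exists_iterate_parent_eq (hH : IsHierarchy H) (hvw : v ≤ w) :
    ∃ n, (parent H)^[n] v = w := by
  induction v using WellFoundedGT.induction with
  | _ v ih =>
    rcases hvw.eq_or_lt with rfl | hlt
    · exact ⟨0, rfl⟩
    have hv := covBy_parent hH (ne_univ_of_lt hlt)
    obtain ⟨n, hn⟩ := ih _ hv.lt (hH.parent_le hlt)
    exact ⟨n + 1, hn⟩

theorem eq_of_parent_eq_singleton (hH : IsHierarchy H) {x : X}
    (hu : parent H u = ⟨{x}, hH.singleton_mem x⟩) : u = ⟨{x}, hH.singleton_mem x⟩ := by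
  have hle := hH.le_parent u
  rw [hu] at hle
  exact Subtype.ext
    ((Set.subset_singleton_iff_eq.mp hle).resolve_left (hH.nonempty u u.2).ne_empty)

theorem exists_child (hH : IsHierarchy H) {x : X} (hx : x ∈ (v : Set X))
    (hne : (v : Set X) ≠ {x}) : ∃ u, parent H u = v ∧ u ≠ v ∧ x ∈ (u : Set X) := by
  have hlt : (⟨{x}, hH.singleton_mem x⟩ : H) < v :=
    Subtype.coe_lt_coe.mp ((Set.singleton_subset_iff.mpr hx).ssubset_of_ne hne.symm)
  obtain ⟨u, hxu, huv⟩ := exists_le_covBy_of_lt hlt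
  exact ⟨u, hH.parent_eq_of_covBy huv, huv.ne, hxu rfl⟩

theorem two_le_ncard_children (hH : IsHierarchy H) (hv : ∀ x, (v : Set X) ≠ {x}) :
    2 ≤ {u | parent H u = v ∧ u ≠ v}.ncard := by
  obtain ⟨x₁, hx₁⟩ := hH.nonempty v v.2
  obtain ⟨u₁, hu₁, hu₁v, hxu₁⟩ := hH.exists_child hx₁ (hv x₁)
  have hu₁lt : u₁ < v := lt_of_le_of_ne (hu₁ ▸ hH.le_parent u₁) hu₁v
  obtain ⟨x₂, hx₂, hx₂u₁⟩ := Set.exists_of_ssubset (Subtype.coe_lt_coe.mpr hu₁lt)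
  obtain ⟨u₂, hu₂, hu₂v, hxu₂⟩ := hH.exists_child hx₂ (hv x₂)
  exact (Set.one_lt_ncard_iff (Set.toFinite _)).mpr
    ⟨u₁, u₂, ⟨hu₁, hu₁v⟩, ⟨hu₂, hu₂v⟩, fun h => hx₂u₁ (h ▸ hxu₂)⟩

noncomputable def toPhyloTree (hH : IsHierarchy H) : PhyloTree H X where
  fin := inferInstance
  root := ⟨Set.univ, hH.univ_mem⟩
  par := parent H
  par_root := parent_eq_self rfl
  reach v := hH.exists_iterate_parent_eq (Subtype.coe_le_coe.mp (Set.subset_univ _))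
  leaf x := ⟨{x}, hH.singleton_mem x⟩
  leaf_inj _ _ h := Set.singleton_injective (congrArg Subtype.val h)
  leaf_isLeaf _ _ := hH.eq_of_parent_eq_singleton
  leaf_only v hv := by
    by_contra hleaf
    obtain ⟨x, hx⟩ := hH.nonempty v v.2
    obtain ⟨u, hu, huv, -⟩ := hH.exists_child hx fun h => hleaf ⟨x, Subtype.ext h.symm⟩
    exact huv (hv u hu)
  root_deg := by
    by_cases h : ∃ x : X, (Set.univ : Set X) = {x}
    · exact Or.inl (h.imp fun x hx => Subtype.ext hx.symm)
    · exact Or.inr (hH.two_le_ncard_children fun x hx => h ⟨x, hx⟩)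
  inner_deg v _ hv := hH.two_le_ncard_children fun x hx => hv ⟨x, Subtype.ext hx.symm⟩

@[simp]
theorem coe_toPhyloTree_leaf (hH : IsHierarchy H) (x : X) :
    (hH.toPhyloTree.leaf x : Set X) = {x} := rfl

theorem toPhyloTree_anc_iff (hH : IsHierarchy H) {u v : H} : hH.toPhyloTree.anc u v ↔ v ≤ u := by
  constructor
  · rintro ⟨n, rfl⟩
    exact Function.id_le_iterate_of_id_le hH.le_parent n v
  · exact hH.exists_iterate_parent_eq

theorem toPhyloTree_isLca_leaf_iff (hH : IsHierarchy H) {l : H} {x y : X} :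
    hH.toPhyloTree.IsLca l (hH.toPhyloTree.leaf x) (hH.toPhyloTree.leaf y) ↔
      x ∈ (l : Set X) ∧ y ∈ (l : Set X) ∧ ∀ u : H, x ∈ (u : Set X) → y ∈ (u : Set X) → l ≤ u := by
  simp only [PhyloTree.IsLca, toPhyloTree_anc_iff, ← Subtype.coe_le_coe, coe_toPhyloTree_leaf,
    Set.singleton_subset_iff]

end IsHierarchy

section Characterization

variable {X M : Type} {ε : X → X → Set M}

def nbrHierarchy (ε : X → X → Set M) : Set (Set X) :=
  NbrSet ε ∪ Set.range ({·}) ∪ {Set.univ}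

theorem isHierarchy_nbrHierarchy [Nonempty X] (hl : HLike (NbrSet ε)) :
    IsHierarchy (nbrHierarchy ε) where
  hlike := by
    refine hlike_iff_subset_or_subset.mpr ?_
    rintro P ((hP | ⟨x, rfl⟩) | rfl) Q ((hQ | ⟨y, rfl⟩) | rfl) ⟨z, hzP, hzQ⟩
    · exact hl.subset_or_subset hP hQ ⟨z, hzP, hzQ⟩
    all_goals first
      | exact Or.inl (Set.subset_univ _)
      | exact Or.inr (Set.subset_univ _)
      | exact Or.inl (Set.singleton_subset_iff.mpr (hzP ▸ hzQ))
      | exact Or.inr (Set.singleton_subset_iff.mpr (hzQ ▸ hzP))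
  univ_mem := Or.inr rfl
  singleton_mem x := Or.inl (Or.inr ⟨x, rfl⟩)
  nonempty := by
    rintro _ ((⟨m, y, rfl⟩ | ⟨x, rfl⟩) | rfl)
    exacts [⟨y, Or.inr rfl⟩, Set.singleton_nonempty x, Set.univ_nonempty]

theorem isFitchMap_of_hlike [Finite X] [Nonempty X] (hl : HLike (NbrSet ε))
    (hsub : NbrSubsetCond ε) : IsFitchMap ε := by
  have hH := isHierarchy_nbrHierarchy hl
  refine ⟨_, hH.toPhyloTree, fun C => {m | ∃ z, (C : Set X) = Nbr ε m z}, fun x y hxy m => ?_⟩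
  simp only [hH.toPhyloTree_isLca_leaf_iff, PhyloTree.edgeOnDown, hH.toPhyloTree_anc_iff,
    ← Subtype.coe_le_coe, hH.coe_toPhyloTree_leaf, Set.singleton_subset_iff, Set.mem_ofPred_eq]
  constructor
  · intro hm
    obtain ⟨L, hL⟩ := hH.toPhyloTree.exists_isLca (hH.toPhyloTree.leaf x) (hH.toPhyloTree.leaf y)
    rw [hH.toPhyloTree_isLca_leaf_iff] at hL
    have hxN : x ∉ Nbr ε m y := by simp [mem_nbr_iff, hxy, hm]
    have hN : Nbr ε m y ∈ nbrHierarchy ε := Or.inl (Or.inl ⟨m, y, rfl⟩)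
    refine ⟨L, hL, ⟨_, hN⟩, ⟨?_, fun h => hxN (by subst h; exact hL.1), mem_nbr_self⟩, y, rfl⟩
    exact (hH.hlike.subset_or_subset hN L.2 ⟨y, mem_nbr_self, hL.2.1⟩).resolve_right
      fun h => hxN (h hL.1)
  · rintro ⟨l, ⟨-, -, hlmin⟩, u, ⟨hul, hne, hyu⟩, z, hz⟩
    by_contra hm
    have hN : Nbr ε m y ⊆ u := hz ▸ hsub m z y (hz ▸ hyu)
    exact hne (Subtype.ext (hul.antisymm (hlmin u (hN (mem_nbr_iff.mpr (Or.inr hm))) hyu)))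

theorem isFitchMap_iff [Finite X] [Nonempty X] :
    IsFitchMap ε ↔ HLike (NbrSet ε) ∧ NbrSubsetCond ε :=
  ⟨fun ⟨_, _, _, hex⟩ => ⟨hex.hlike_nbrSet, hex.nbrSubsetCond⟩,
    fun ⟨hl, hsub⟩ => isFitchMap_of_hlike hl hsub⟩

def HasForbiddenConfig (ε : X → X → Set M) : Prop :=
  ∃ m m' : M,
    (∃ a b c : X, a ≠ b ∧ a ≠ c ∧ b ≠ c ∧
      m ∈ ε c b ∧ m ∉ ε a b ∧
      (m ∉ ε c a ∨
        (m' ∉ ε a c ∧ m' ∈ ε b c) ∨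
        (m' ∈ ε a c ∧ m' ∉ ε b c) ∨
        (m ≠ m' ∧ m' ∉ ε c b ∧ m' ∈ ε a b))) ∨
    (∃ a b c d : X, a ≠ b ∧ a ≠ c ∧ a ≠ d ∧ b ≠ c ∧ b ≠ d ∧ c ≠ d ∧
      m ∈ ε c b ∧ m ∉ ε a b ∧
      m ≠ m' ∧ m' ∉ ε b d ∧ m' ∉ ε c d ∧ m' ∈ ε a d)

theorem hasForbiddenConfig_of_not_nbrSubsetCond (h : ¬ NbrSubsetCond ε) :
    HasForbiddenConfig ε := by
  simp only [NbrSubsetCond, not_forall, Set.not_subset] at h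
  obtain ⟨m, b, a, ha, c, hca, hcb⟩ := h
  rw [mem_nbr_iff] at ha hca hcb
  exact ⟨m, m, Or.inl ⟨a, b, c, by grind⟩⟩

theorem hasForbiddenConfig_of_not_hlike (h : ¬ HLike (NbrSet ε)) : HasForbiddenConfig ε := by
  simp only [hlike_iff_subset_or_subset, not_forall, not_or, Set.not_subset] at h
  obtain ⟨_, ⟨m, b, rfl⟩, _, ⟨m', d, rfl⟩, ⟨p, hpP, hpQ⟩, ⟨q, hqP, hqQ⟩, ⟨r, hrQ, hrP⟩⟩ := h
  simp only [mem_nbr_iff] at hpP hpQ hqP hqQ hrQ hrP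
  by_cases hbd : b = d
  · subst hbd
    exact ⟨m, m', Or.inl ⟨q, b, r, by grind⟩⟩
  by_cases hbQ : b ∈ Nbr ε m' d <;> by_cases hdP : d ∈ Nbr ε m b <;>
    rw [mem_nbr_iff] at hbQ hdP
  · by_cases hmm : m = m'
    · exact ⟨m, m, Or.inl ⟨d, b, r, by grind⟩⟩
    · exact ⟨m, m', Or.inr ⟨q, b, r, d, by grind⟩⟩
  · exact ⟨m, m', Or.inl ⟨q, b, d, by grind⟩⟩
  · exact ⟨m', m, Or.inl ⟨r, d, b, by grind⟩⟩
  · exact ⟨m, m', Or.inl ⟨p, b, d, by grind⟩⟩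

theorem not_and_of_hasForbiddenConfig (h : HasForbiddenConfig ε) :
    ¬ (HLike (NbrSet ε) ∧ NbrSubsetCond ε) := by
  rintro ⟨hl, hsub⟩
  obtain ⟨m, m', ⟨a, b, c, hab, hac, hbc, hcb, hab', hopt⟩ |
    ⟨a, b, c, d, hab, hac, had, hbc, hbd, hcd, hcb, hab', hmm, hbd', hcd', had'⟩⟩ := h
  · rcases hopt with hca | ⟨hac', hbc'⟩ | ⟨hac', hbc'⟩ | ⟨hmm, hcb', hab''⟩
    · have hcN := hsub m b a (mem_nbr_iff.mpr (Or.inr hab')) (mem_nbr_iff.mpr (Or.inr hca))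
      exact (mem_nbr_iff.mp hcN).elim (fun h => hbc h.symm) (· hcb)
    · refine hl.not_crossing ⟨m, b, rfl⟩ ⟨m', c, rfl⟩ (p := a) (q := b) (r := c) ?_ ?_ ?_ <;>
        simp only [Set.mem_inter_iff, Set.mem_sdiff, mem_nbr_iff] <;> grind
    · refine hl.not_crossing ⟨m, b, rfl⟩ ⟨m', c, rfl⟩ (p := b) (q := a) (r := c) ?_ ?_ ?_ <;>
        simp only [Set.mem_inter_iff, Set.mem_sdiff, mem_nbr_iff] <;> grind
    · refine hl.not_crossing ⟨m, b, rfl⟩ ⟨m', b, rfl⟩ (p := b) (q := a) (r := c) ?_ ?_ ?_ <;>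
        simp only [Set.mem_inter_iff, Set.mem_sdiff, mem_nbr_iff] <;> grind
  · refine hl.not_crossing ⟨m, b, rfl⟩ ⟨m', d, rfl⟩ (p := b) (q := a) (r := c) ?_ ?_ ?_ <;>
      simp only [Set.mem_inter_iff, Set.mem_sdiff, mem_nbr_iff] <;> grind

theorem hasForbiddenConfig_iff :
    HasForbiddenConfig ε ↔ ¬ (HLike (NbrSet ε) ∧ NbrSubsetCond ε) :=
  ⟨not_and_of_hasForbiddenConfig, fun h => (not_and_or.mp h).elim
    hasForbiddenConfig_of_not_hlike hasForbiddenConfig_of_not_nbrSubsetCond⟩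

end Characterization

theorem not_fitch_iff_general {X M : Type} [Fintype X] [Nonempty X]
    (ε : X → X → Set M) :
    ¬ IsFitchMap ε ↔
      ∃ m m' : M,
        (∃ a b c : X, a ≠ b ∧ a ≠ c ∧ b ≠ c ∧
          m ∈ ε c b ∧ m ∉ ε a b ∧
          (m ∉ ε c a ∨
            (m' ∉ ε a c ∧ m' ∈ ε b c) ∨
            (m' ∈ ε a c ∧ m' ∉ ε b c) ∨
            (m ≠ m' ∧ m' ∉ ε c b ∧ m' ∈ ε a b))) ∨
        (∃ a b c d : X, a ≠ b ∧ a ≠ c ∧ a ≠ d ∧ b ≠ c ∧ b ≠ d ∧ c ≠ d ∧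
          m ∈ ε c b ∧ m ∉ ε a b ∧
          m ≠ m' ∧ m' ∉ ε b d ∧ m' ∉ ε c d ∧ m' ∈ ε a d) :=
  isFitchMap_iff.not.trans hasForbiddenConfig_iff.symm

/-- characterization of non-Fitch maps via forbidden configurations. -/
theorem not_fitch_iff {X M : Type} [Fintype X] [Fintype M] [Nonempty X] [Nonempty M]
    (ε : X → X → Set M) :
    ¬ IsFitchMap ε ↔
      ∃ m m' : M,
        (∃ a b c : X, a ≠ b ∧ a ≠ c ∧ b ≠ c ∧
          m ∈ ε c b ∧ m ∉ ε a b ∧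
          (m ∉ ε c a ∨
            (m' ∉ ε a c ∧ m' ∈ ε b c) ∨
            (m' ∈ ε a c ∧ m' ∉ ε b c) ∨
            (m ≠ m' ∧ m' ∉ ε c b ∧ m' ∈ ε a b))) ∨
        (∃ a b c d : X, a ≠ b ∧ a ≠ c ∧ a ≠ d ∧ b ≠ c ∧ b ≠ d ∧ c ≠ d ∧
          m ∈ ε c b ∧ m ∉ ε a b ∧
          m ≠ m' ∧ m' ∉ ε b d ∧ m' ∉ ε c d ∧ m' ∈ ε a d) :=
  not_fitch_iff_general ε
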